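/- arXiv:1309.4080 — 5 statements merged into one kernel-verified Lean document; each statement's English description precedes it below -/
import Mathlib

section
/- Every smooth solution φ of the system φ_zz + y·φ_xx = 0, φ_yy = 0 on ℝ³ satisfies the higher-order hidden integrability conditions φ_xxxx = 0 and φ_xxzz = 0 (the fourth pure x-derivative and the mixed fourth derivative ∂_z∂_z∂_x∂_x φ vanish identically on all of ℝ³). (The condition φ_zxzx = 0 is the fourth-order constraint produced by the second prolongation in the Cartan algorithm; it holds first on the open set y ≠ 0 and extends to all of ℝ³ by continuity.) -/
/-- Partial derivative with respect to the first coordinate `x`. -/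
noncomputable def pdx (u : ℝ → ℝ → ℝ → ℝ) : ℝ → ℝ → ℝ → ℝ :=
  fun x y z => deriv (fun t => u t y z) x

/-- Partial derivative with respect to the second coordinate `y`. -/
noncomputable def pdy (u : ℝ → ℝ → ℝ → ℝ) : ℝ → ℝ → ℝ → ℝ :=
  fun x y z => deriv (fun t => u x t z) y

/-- Partial derivative with respect to the third coordinate `z`. -/
noncomputable def pdz (u : ℝ → ℝ → ℝ → ℝ) : ℝ → ℝ → ℝ → ℝ :=
  fun x y z => deriv (fun t => u x y t) z

abbrev E3 : Type := ℝ × ℝ × ℝ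

/-- Directional derivative. -/
noncomputable def Dv (v : E3) (F : E3 → ℝ) : E3 → ℝ := fun p => fderiv ℝ F p v

lemma Dv_smooth (v : E3) {F : E3 → ℝ} (hF : ContDiff ℝ (⊤ : ℕ∞) F) : ContDiff ℝ (⊤ : ℕ∞) (Dv v F) := by
  have h : ContDiff ℝ (⊤ : ℕ∞) (fderiv ℝ F) := hF.fderiv_right (le_of_eq (by simp))
  exact (ContinuousLinearMap.apply ℝ ℝ v).contDiff.comp h

lemma Dv_comm {F : E3 → ℝ} (hF : ContDiff ℝ (⊤ : ℕ∞) F) (v w : E3) :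
    Dv v (Dv w F) = Dv w (Dv v F) := by
  funext p
  have hsymm : IsSymmSndFDerivAt ℝ F p :=
    hF.contDiffAt.isSymmSndFDerivAt (by rw [minSmoothness_of_isRCLikeNormedField]; exact WithTop.coe_le_coe.mpr le_top)
  have key : ∀ u : E3, Dv u F = fun q => (ContinuousLinearMap.apply ℝ ℝ u) (fderiv ℝ F q) :=
    fun u => rfl
  have hd : DifferentiableAt ℝ (fderiv ℝ F) p :=
    ((hF.fderiv_right (m := (⊤ : ℕ∞)) (le_of_eq (by simp))).differentiable (by simp)) p
  have comp : ∀ u : E3, fderiv ℝ (Dv u F) p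
      = (ContinuousLinearMap.apply ℝ ℝ u).comp (fderiv ℝ (fderiv ℝ F) p) := by
    intro u
    rw [key u]
    exact ((ContinuousLinearMap.apply ℝ ℝ u).hasFDerivAt.comp p hd.hasFDerivAt).fderiv
  show fderiv ℝ (Dv w F) p v = fderiv ℝ (Dv v F) p w
  rw [comp v, comp w]
  simpa using hsymm v w

lemma Dv_zero (v : E3) : Dv v (fun _ => (0:ℝ)) = fun _ => 0 := by
  funext p
  simp [Dv]

/-- Move the outer directional derivative inside past two others. -/
lemma Dv_rot3 {G : E3 → ℝ} (hG : ContDiff ℝ (⊤ : ℕ∞) G) (a b c : E3) :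
    Dv a (Dv b (Dv c G)) = Dv b (Dv c (Dv a G)) := by
  rw [Dv_comm (Dv_smooth c hG) a b, Dv_comm hG a c]

noncomputable def e1 : E3 := (1, 0, 0)
noncomputable def e2 : E3 := (0, 1, 0)
noncomputable def e3 : E3 := (0, 0, 1)

lemma pdx_eq {ψ : ℝ → ℝ → ℝ → ℝ} {G : E3 → ℝ} (hG : ContDiff ℝ (⊤ : ℕ∞) G)
    (h : ∀ x y z : ℝ, ψ x y z = G (x, y, z)) (x y z : ℝ) :
    pdx ψ x y z = Dv e1 G (x, y, z) := by
  have hcurve : HasDerivAt (fun t : ℝ => ((t, y, z) : E3)) e1 x :=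
    (hasDerivAt_id x).prodMk (hasDerivAt_const x ((y, z) : ℝ × ℝ))
  have hd : HasDerivAt (fun t => G (t, y, z)) (fderiv ℝ G (x, y, z) e1) x :=
    ((hG.differentiable (by simp) (x, y, z)).hasFDerivAt).comp_hasDerivAt x hcurve
  have : (fun t => ψ t y z) = fun t => G (t, y, z) := funext fun t => h t y z
  rw [pdx, this]
  exact hd.deriv

lemma pdy_eq {ψ : ℝ → ℝ → ℝ → ℝ} {G : E3 → ℝ} (hG : ContDiff ℝ (⊤ : ℕ∞) G)
    (h : ∀ x y z : ℝ, ψ x y z = G (x, y, z)) (x y z : ℝ) :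
    pdy ψ x y z = Dv e2 G (x, y, z) := by
  have hcurve : HasDerivAt (fun t : ℝ => ((x, t, z) : E3)) e2 y :=
    (hasDerivAt_const y x).prodMk ((hasDerivAt_id y).prodMk (hasDerivAt_const y z))
  have hd : HasDerivAt (fun t => G (x, t, z)) (fderiv ℝ G (x, y, z) e2) y :=
    ((hG.differentiable (by simp) (x, y, z)).hasFDerivAt).comp_hasDerivAt y hcurve
  have : (fun t => ψ x t z) = fun t => G (x, t, z) := funext fun t => h x t z
  rw [pdy, this]
  exact hd.deriv

lemma pdz_eq {ψ : ℝ → ℝ → ℝ → ℝ} {G : E3 → ℝ} (hG : ContDiff ℝ (⊤ : ℕ∞) G)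
    (h : ∀ x y z : ℝ, ψ x y z = G (x, y, z)) (x y z : ℝ) :
    pdz ψ x y z = Dv e3 G (x, y, z) := by
  have hcurve : HasDerivAt (fun t : ℝ => ((x, y, t) : E3)) e3 z :=
    (hasDerivAt_const z x).prodMk ((hasDerivAt_const z y).prodMk (hasDerivAt_id z))
  have hd : HasDerivAt (fun t => G (x, y, t)) (fderiv ℝ G (x, y, z) e3) z :=
    ((hG.differentiable (by simp) (x, y, z)).hasFDerivAt).comp_hasDerivAt z hcurve
  have : (fun t => ψ x y t) = fun t => G (x, y, t) := funext fun t => h x y t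
  rw [pdz, this]
  exact hd.deriv

/-- Sum/product rule for `q ↦ C q + q.2.1 * A q`. -/
lemma Dv_add_y_mul {C A : E3 → ℝ} (hC : ContDiff ℝ (⊤ : ℕ∞) C) (hA : ContDiff ℝ (⊤ : ℕ∞) A) (v : E3) (p : E3) :
    Dv v (fun q => C q + q.2.1 * A q) p
      = Dv v C p + v.2.1 * A p + p.2.1 * Dv v A p := by
  have hy : HasFDerivAt (fun q : E3 => q.2.1)
      ((ContinuousLinearMap.fst ℝ ℝ ℝ).comp (ContinuousLinearMap.snd ℝ ℝ (ℝ × ℝ))) p :=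
    ((ContinuousLinearMap.fst ℝ ℝ ℝ).comp (ContinuousLinearMap.snd ℝ ℝ (ℝ × ℝ))).hasFDerivAt
  have hAp := (hA.differentiable (by simp) p).hasFDerivAt
  have hCp := (hC.differentiable (by simp) p).hasFDerivAt
  have hsum : HasFDerivAt (fun q => C q + q.2.1 * A q) _ p := hCp.add (hy.mul' hAp)
  show fderiv ℝ (fun q => C q + q.2.1 * A q) p v = _
  rw [hsum.fderiv]
  simp [Dv, mul_comm]
  ring

/-- Every smooth solution `φ` of `φ_zz + y·φ_xx = 0`, `φ_yy = 0` on ℝ³ satisfies the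
higher-order hidden integrability conditions `φ_xxxx = 0` and `φ_xxzz = 0`
(the fourth derivatives `∂_x∂_x∂_x∂_x φ` and `∂_z∂_z∂_x∂_x φ` vanish identically). -/
theorem stmt2 (φ : ℝ → ℝ → ℝ → ℝ)
    (hφ : ContDiff ℝ (⊤ : ℕ∞) (fun p : ℝ × ℝ × ℝ => φ p.1 p.2.1 p.2.2))
    (h1 : ∀ x y z : ℝ, pdz (pdz φ) x y z + y * pdx (pdx φ) x y z = 0)
    (h2 : ∀ x y z : ℝ, pdy (pdy φ) x y z = 0) :
    (∀ x y z : ℝ, pdx (pdx (pdx (pdx φ))) x y z = 0) ∧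
      (∀ x y z : ℝ, pdz (pdz (pdx (pdx φ))) x y z = 0) := by
  set F : E3 → ℝ := fun p => φ p.1 p.2.1 p.2.2 with hFdef
  have hF : ContDiff ℝ (⊤ : ℕ∞) F := hφ
  have hbase : ∀ x y z : ℝ, φ x y z = F (x, y, z) := fun _ _ _ => rfl
  -- translated partial derivatives
  have t1 : ∀ x y z : ℝ, pdx φ x y z = Dv e1 F (x, y, z) := pdx_eq hF hbase
  have t11 : ∀ x y z : ℝ, pdx (pdx φ) x y z = Dv e1 (Dv e1 F) (x, y, z) :=
    pdx_eq (Dv_smooth e1 hF) t1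
  have t3 : ∀ x y z : ℝ, pdz φ x y z = Dv e3 F (x, y, z) := pdz_eq hF hbase
  have t33 : ∀ x y z : ℝ, pdz (pdz φ) x y z = Dv e3 (Dv e3 F) (x, y, z) :=
    pdz_eq (Dv_smooth e3 hF) t3
  have t2 : ∀ x y z : ℝ, pdy φ x y z = Dv e2 F (x, y, z) := pdy_eq hF hbase
  have t22 : ∀ x y z : ℝ, pdy (pdy φ) x y z = Dv e2 (Dv e2 F) (x, y, z) :=
    pdy_eq (Dv_smooth e2 hF) t2
  set A : E3 → ℝ := Dv e1 (Dv e1 F) with hAdef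
  set C : E3 → ℝ := Dv e3 (Dv e3 F) with hCdef
  have hA : ContDiff ℝ (⊤ : ℕ∞) A := Dv_smooth _ (Dv_smooth _ hF)
  have hC : ContDiff ℝ (⊤ : ℕ∞) C := Dv_smooth _ (Dv_smooth _ hF)
  -- translated hypotheses
  have h1' : (fun p : E3 => C p + p.2.1 * A p) = fun _ => 0 := by
    funext p
    have := h1 p.1 p.2.1 p.2.2
    rwa [t33, t11] at this
  have h2' : Dv e2 (Dv e2 F) = fun _ => 0 := by
    funext p
    have := h2 p.1 p.2.1 p.2.2
    rwa [t22] at this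
  -- second y-derivatives of A and C vanish
  have hYYA : Dv e2 (Dv e2 A) = fun _ => 0 := by
    rw [hAdef, Dv_rot3 hF e2 e1 e1, Dv_rot3 (Dv_smooth e2 hF) e2 e1 e1, h2',
      Dv_zero, Dv_zero]
  have hYYC : Dv e2 (Dv e2 C) = fun _ => 0 := by
    rw [hCdef, Dv_rot3 hF e2 e3 e3, Dv_rot3 (Dv_smooth e2 hF) e2 e3 e3, h2',
      Dv_zero, Dv_zero]
  have he1 : e1.2.1 = 0 := rfl
  have he2 : e2.2.1 = 1 := rfl
  -- step B: differentiate h1' in y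
  have eqB : (fun p : E3 => (Dv e2 C p + A p) + p.2.1 * Dv e2 A p) = fun _ => 0 := by
    funext p
    have := congrFun (congrArg (Dv e2) h1') p
    rw [Dv_add_y_mul hC hA e2 p, Dv_zero] at this
    simp only [he2, one_mul] at this
    linarith [this]
  -- step C: differentiate again in y, conclude Dv e2 A = 0
  have hYA : Dv e2 A = fun _ => 0 := by
    funext p
    have hC' : ContDiff ℝ (⊤ : ℕ∞) (fun q => Dv e2 C q + A q) := (Dv_smooth e2 hC).add hA
    have := congrFun (congrArg (Dv e2) eqB) p
    rw [Dv_add_y_mul hC' (Dv_smooth e2 hA) e2 p, Dv_zero] at this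
    have hadd : Dv e2 (fun q => Dv e2 C q + A q) p = Dv e2 (Dv e2 C) p + Dv e2 A p := by
      show fderiv ℝ _ p e2 = _
      rw [fderiv_fun_add ((Dv_smooth e2 hC).differentiable (by simp) p) (hA.differentiable (by simp) p)]
      rfl
    rw [hadd, congrFun hYYC p, congrFun hYYA p] at this
    simp only [he2, one_mul] at this
    show Dv e2 A p = 0
    linarith [this]
  -- step D: differentiate h1' twice in x
  have eqD1 : (fun p : E3 => Dv e1 C p + p.2.1 * Dv e1 A p) = fun _ => 0 := by
    funext p
    have := congrFun (congrArg (Dv e1) h1') p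
    rw [Dv_add_y_mul hC hA e1 p, Dv_zero] at this
    simp only [he1, zero_mul] at this
    linarith [this]
  have eqD : (fun p : E3 => Dv e1 (Dv e1 C) p + p.2.1 * Dv e1 (Dv e1 A) p) = fun _ => 0 := by
    funext p
    have := congrFun (congrArg (Dv e1) eqD1) p
    rw [Dv_add_y_mul (Dv_smooth e1 hC) (Dv_smooth e1 hA) e1 p, Dv_zero] at this
    simp only [he1, zero_mul] at this
    linarith [this]
  -- commuting: Dv e1 (Dv e1 C) = Dv e3 (Dv e3 A)
  have hCA : Dv e1 (Dv e1 C) = Dv e3 (Dv e3 A) := by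
    rw [hCdef, hAdef]
    exact (congrArg (Dv e1) (Dv_rot3 hF e1 e3 e3)).trans (Dv_rot3 (Dv_smooth e1 hF) e1 e3 e3)
  -- step E: differentiate eqD in y, conclude Dv e1 (Dv e1 A) = 0
  have hXXXX : Dv e1 (Dv e1 A) = fun _ => 0 := by
    funext p
    have := congrFun (congrArg (Dv e2) eqD) p
    rw [Dv_add_y_mul (Dv_smooth e1 (Dv_smooth e1 hC)) (Dv_smooth e1 (Dv_smooth e1 hA)) e2 p,
      Dv_zero] at this
    have hz1 : Dv e2 (Dv e1 (Dv e1 C)) p = 0 := by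
      rw [hCA, Dv_rot3 hA e2 e3 e3, hYA, Dv_zero, Dv_zero]
    have hz2 : Dv e2 (Dv e1 (Dv e1 A)) p = 0 := by
      rw [Dv_rot3 hA e2 e1 e1, hYA, Dv_zero, Dv_zero]
    rw [hz1, hz2] at this
    simp only [he2, one_mul, mul_zero] at this
    show Dv e1 (Dv e1 A) p = 0
    linarith [this]
  have hXXZZ : Dv e3 (Dv e3 A) = fun _ => 0 := by
    rw [← hCA]
    funext p
    have := congrFun eqD p
    rw [congrFun hXXXX p] at this
    simp only [Pi.zero_apply, mul_zero] at this ⊢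
    linarith [this]
  constructor
  · intro x y z
    have t4 : pdx (pdx (pdx (pdx φ))) x y z = Dv e1 (Dv e1 A) (x, y, z) :=
      pdx_eq (Dv_smooth e1 hA) (pdx_eq hA t11) x y z
    rw [t4, hXXXX]
  · intro x y z
    have t5 : pdz (pdz (pdx (pdx φ))) x y z = Dv e3 (Dv e3 A) (x, y, z) :=
      pdz_eq (Dv_smooth e3 hA) (pdz_eq hA t11) x y z
    rw [t5, hXXZZ]
end

section
/- Any solution of the Hamilton–Cartan system (i) q̇¹ = v¹, (ii) q̇² = v², (iii) v̇¹ = β(q¹−q²) − αv², (iv) αv¹ = β(q¹−q²) satisfies the secondary constraint (α² − β)(v¹ − v²) = 0, equivalently (α² − β)(αv² − β(q¹−q²)) = 0. (This is the secondary constraint produced by the Cartan algorithm in the Sundermeyer example.) -/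
/-! Differentiating the primary constraint `αv¹ = β(q¹ − q²)` along a solution gives
`α v̇¹ = β(v¹ − v²)`. Substituting the equation of motion for `v̇¹` and the primary constraint
once more for `α²v¹` turns this into `(α² − β)(v¹ − v²) = 0`. -/

theorem const_mul_deriv_eq_deriv_of_forall_const_mul_eq {𝕜 : Type*} [NontriviallyNormedField 𝕜]
    {c : 𝕜} {f g : 𝕜 → 𝕜} (h : ∀ t, c * f t = g t) (t : 𝕜) :
    c * deriv f t = deriv g t := by
  rw [← deriv_const_mul_field, funext h]

theorem stmt7_general (α β : ℝ) (q1 q2 v1 v2 : ℝ → ℝ)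
    (hq1 : Differentiable ℝ q1) (hq2 : Differentiable ℝ q2)
    (h1 : ∀ t, deriv q1 t = v1 t)
    (h2 : ∀ t, deriv q2 t = v2 t)
    (h3 : ∀ t, deriv v1 t = β * (q1 t - q2 t) - α * v2 t)
    (h4 : ∀ t, α * v1 t = β * (q1 t - q2 t)) :
    (∀ t, (α ^ 2 - β) * (v1 t - v2 t) = 0) ∧
      (∀ t, (α ^ 2 - β) * (α * v2 t - β * (q1 t - q2 t)) = 0) := by
  have h4_deriv (t : ℝ) : α * deriv v1 t = β * (v1 t - v2 t) := by
    rw [const_mul_deriv_eq_deriv_of_forall_const_mul_eq h4, deriv_const_mul_field,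
      deriv_fun_sub (hq1 t) (hq2 t), h1, h2]
  have secondary (t : ℝ) : (α ^ 2 - β) * (v1 t - v2 t) = 0 := by
    linear_combination h4_deriv t - α * h3 t + α * h4 t
  exact ⟨secondary, fun t => by linear_combination (-α) * secondary t + (α ^ 2 - β) * h4 t⟩

/-- Any solution of the Hamilton–Cartan system
(i) `q̇¹ = v¹`, (ii) `q̇² = v²`, (iii) `v̇¹ = β(q¹−q²) − αv²`,
(iv) `αv¹ = β(q¹−q²)` satisfies the secondary constraint
`(α² − β)(v¹ − v²) = 0`, equivalently `(α² − β)(αv² − β(q¹−q²)) = 0`. -/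
theorem stmt7 (α β : ℝ) (q1 q2 v1 v2 : ℝ → ℝ)
    (hq1 : Differentiable ℝ q1) (hq2 : Differentiable ℝ q2)
    (hv1 : Differentiable ℝ v1) (hv2 : Differentiable ℝ v2)
    (h1 : ∀ t, deriv q1 t = v1 t)
    (h2 : ∀ t, deriv q2 t = v2 t)
    (h3 : ∀ t, deriv v1 t = β * (q1 t - q2 t) - α * v2 t)
    (h4 : ∀ t, α * v1 t = β * (q1 t - q2 t)) :
    (∀ t, (α ^ 2 - β) * (v1 t - v2 t) = 0) ∧
      (∀ t, (α ^ 2 - β) * (α * v2 t - β * (q1 t - q2 t)) = 0) :=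
  stmt7_general α β q1 q2 v1 v2 hq1 hq2 h1 h2 h3 h4
end

section
/- (Case α ≠ 0, β ≠ α².) Any solution of the Hamilton–Cartan system (i) q̇¹ = v¹, (ii) q̇² = v², (iii) v̇¹ = β(q¹−q²) − αv², (iv) αv¹ = β(q¹−q²) with α ≠ 0 and β ≠ α² satisfies v¹ = v² and hence the final equations of motion q̇¹ = q̇² = (β/α)(q¹ − q²). -/
/-!
Differentiating the primary constraint (iv) along a solution and substituting (i)–(iv) gives
`(α² - β) (v¹ - v²) = 0`, so `v¹ = v²`; dividing (iv) by `α` then yields the equations of motion.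
-/

theorem mul_deriv_eq_mul_deriv_of_forall_mul_eq {𝕜 𝕜' : Type*} [NontriviallyNormedField 𝕜]
    [NormedDivisionRing 𝕜'] [NormedAlgebra 𝕜 𝕜'] {a b : 𝕜'} {f g : 𝕜 → 𝕜'}
    (h : ∀ x, a * f x = b * g x) (x : 𝕜) :
    a * deriv f x = b * deriv g x := by
  rw [← deriv_const_mul_field, ← deriv_const_mul_field, funext h]

theorem stmt8_general (α β : ℝ) (hα : α ≠ 0) (hβ : β ≠ α ^ 2) (q1 q2 v1 v2 : ℝ → ℝ)
    (hq1 : Differentiable ℝ q1) (hq2 : Differentiable ℝ q2)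
    (h1 : ∀ t, deriv q1 t = v1 t)
    (h2 : ∀ t, deriv q2 t = v2 t)
    (h3 : ∀ t, deriv v1 t = β * (q1 t - q2 t) - α * v2 t)
    (h4 : ∀ t, α * v1 t = β * (q1 t - q2 t)) :
    (∀ t, v1 t = v2 t) ∧
      (∀ t, deriv q1 t = (β / α) * (q1 t - q2 t)) ∧
      (∀ t, deriv q2 t = (β / α) * (q1 t - q2 t)) := by
  have hconstraint_deriv : ∀ t, α * deriv v1 t = β * (v1 t - v2 t) := fun t => by
    rw [← h1 t, ← h2 t, ← ((hq1 t).hasDerivAt.sub (hq2 t).hasDerivAt).deriv]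
    exact mul_deriv_eq_mul_deriv_of_forall_mul_eq h4 t
  have hv : ∀ t, v1 t = v2 t := fun t => by
    have hfactor : (α ^ 2 - β) * (v1 t - v2 t) = 0 := by
      linear_combination α * h4 t - α * h3 t + hconstraint_deriv t
    have hcoeff : α ^ 2 - β ≠ 0 := sub_ne_zero.mpr hβ.symm
    exact sub_eq_zero.mp ((mul_eq_zero.mp hfactor).resolve_left hcoeff)
  have hmotion : ∀ t, v1 t = (β / α) * (q1 t - q2 t) := fun t => by
    rw [div_mul_eq_mul_div, eq_div_iff hα, mul_comm, h4 t]
  exact ⟨hv, fun t => (h1 t).trans (hmotion t),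
    fun t => (h2 t).trans ((hv t).symm.trans (hmotion t))⟩

/-- (Case `α ≠ 0`, `β ≠ α²`.) Any solution of the Hamilton–Cartan system
(i) `q̇¹ = v¹`, (ii) `q̇² = v²`, (iii) `v̇¹ = β(q¹−q²) − αv²`,
(iv) `αv¹ = β(q¹−q²)` with `α ≠ 0` and `β ≠ α²` satisfies `v¹ = v²`
and hence the final equations of motion `q̇¹ = q̇² = (β/α)(q¹ − q²)`. -/
theorem stmt8 (α β : ℝ) (hα : α ≠ 0) (hβ : β ≠ α ^ 2) (q1 q2 v1 v2 : ℝ → ℝ)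
    (hq1 : Differentiable ℝ q1) (hq2 : Differentiable ℝ q2)
    (hv1 : Differentiable ℝ v1) (hv2 : Differentiable ℝ v2)
    (h1 : ∀ t, deriv q1 t = v1 t)
    (h2 : ∀ t, deriv q2 t = v2 t)
    (h3 : ∀ t, deriv v1 t = β * (q1 t - q2 t) - α * v2 t)
    (h4 : ∀ t, α * v1 t = β * (q1 t - q2 t)) :
    (∀ t, v1 t = v2 t) ∧
      (∀ t, deriv q1 t = (β / α) * (q1 t - q2 t)) ∧
      (∀ t, deriv q2 t = (β / α) * (q1 t - q2 t)) :=
  stmt8_general α β hα hβ q1 q2 v1 v2 hq1 hq2 h1 h2 h3 h4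
end

section
/- (Case α ≠ 0, β = α².) Assume α ≠ 0 and β = α². Then a quadruple of differentiable functions (q¹, q², v¹, v²) satisfies the Hamilton–Cartan system (i) q̇¹ = v¹, (ii) q̇² = v², (iii) v̇¹ = β(q¹−q²) − αv², (iv) αv¹ = β(q¹−q²) if and only if v¹ = q̇¹, v² = q̇² and q̇¹ = α(q¹ − q²); in particular the function q² is left completely arbitrary (no further restriction on q² arises, the system being involutive on this constraint set). -/
/-! With `β = α²` and `α ≠ 0`, the constraint (iv) says exactly `v¹ = α (q¹ - q²)`, which together
with (i) is the equation `q̇¹ = α (q¹ - q²)`. Differentiating `v¹ = α (q¹ - q²)` and using (ii) gives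
`v̇¹ = α² (q¹ - q²) - α v²`, so (iii) holds automatically and `q²` stays free. -/

lemma mul_eq_sq_mul_iff {K : Type*} [Field K] {a x y : K} (ha : a ≠ 0) :
    a * x = a ^ 2 * y ↔ x = a * y := by
  rw [sq, mul_assoc]
  exact mul_right_inj' ha

lemma deriv_const_mul_sub {𝕜 : Type*} [NontriviallyNormedField 𝕜] {f g : 𝕜 → 𝕜} (c : 𝕜)
    {t : 𝕜} (hf : DifferentiableAt 𝕜 f t) (hg : DifferentiableAt 𝕜 g t) :
    deriv (fun s => c * (f s - g s)) t = c * (deriv f t - deriv g t) := by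
  rw [deriv_const_mul _ (hf.fun_sub hg), deriv_fun_sub hf hg]

theorem stmt9_general (α β : ℝ) (hα : α ≠ 0) (hβ : β = α ^ 2) (q1 q2 v1 v2 : ℝ → ℝ)
    (hq1 : Differentiable ℝ q1) (hq2 : Differentiable ℝ q2) :
    ((∀ t, deriv q1 t = v1 t) ∧ (∀ t, deriv q2 t = v2 t) ∧
        (∀ t, deriv v1 t = β * (q1 t - q2 t) - α * v2 t) ∧
        (∀ t, α * v1 t = β * (q1 t - q2 t))) ↔
      ((∀ t, v1 t = deriv q1 t) ∧ (∀ t, v2 t = deriv q2 t) ∧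
        (∀ t, deriv q1 t = α * (q1 t - q2 t))) := by
  subst hβ
  constructor
  · rintro ⟨hq1v, hq2v, -, hconstr⟩
    refine ⟨fun t => (hq1v t).symm, fun t => (hq2v t).symm, fun t => ?_⟩
    rw [hq1v t, ← mul_eq_sq_mul_iff hα]
    exact hconstr t
  · rintro ⟨hv1q, hv2q, hq1eq⟩
    have hv1 : v1 = fun s => α * (q1 s - q2 s) := funext fun s => (hv1q s).trans (hq1eq s)
    refine ⟨fun t => (hv1q t).symm, fun t => (hv2q t).symm, fun t => ?_, fun t => ?_⟩
    · rw [hv1, deriv_const_mul_sub α (hq1 t) (hq2 t), hq1eq, ← hv2q]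
      ring
    · rw [mul_eq_sq_mul_iff hα, hv1]

/-- (Case `α ≠ 0`, `β = α²`.) A quadruple of differentiable functions
`(q¹, q², v¹, v²)` satisfies the Hamilton–Cartan system
(i) `q̇¹ = v¹`, (ii) `q̇² = v²`, (iii) `v̇¹ = β(q¹−q²) − αv²`,
(iv) `αv¹ = β(q¹−q²)` if and only if `v¹ = q̇¹`, `v² = q̇²` and
`q̇¹ = α(q¹ − q²)`; in particular `q²` is left completely arbitrary. -/
theorem stmt9 (α β : ℝ) (hα : α ≠ 0) (hβ : β = α ^ 2) (q1 q2 v1 v2 : ℝ → ℝ)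
    (hq1 : Differentiable ℝ q1) (hq2 : Differentiable ℝ q2)
    (hv1 : Differentiable ℝ v1) (hv2 : Differentiable ℝ v2) :
    ((∀ t, deriv q1 t = v1 t) ∧ (∀ t, deriv q2 t = v2 t) ∧
        (∀ t, deriv v1 t = β * (q1 t - q2 t) - α * v2 t) ∧
        (∀ t, α * v1 t = β * (q1 t - q2 t))) ↔
      ((∀ t, v1 t = deriv q1 t) ∧ (∀ t, v2 t = deriv q2 t) ∧
        (∀ t, deriv q1 t = α * (q1 t - q2 t))) :=
  stmt9_general α β hα hβ q1 q2 v1 v2 hq1 hq2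
end

section
/- (Case α = 0, β ≠ 0.) Assume α = 0 and β ≠ 0. Then a quadruple of twice differentiable functions (q¹, q², v¹, v²) satisfies the Hamilton–Cartan system (i) q̇¹ = v¹, (ii) q̇² = v², (iii) v̇¹ = β(q¹−q²) − αv², (iv) αv¹ = β(q¹−q²) if and only if v¹ = q̇¹, v² = q̇², the constraints q¹ = q² and v¹ = v² hold, and the final equation of motion q̈² = 0 holds. -/
/-! For `α = 0` the primary constraint (iv) reads `β (q¹ − q²) = 0`, which forces `q¹ = q²`
since `β ≠ 0`. Then (i) and (ii) give `v¹ = q̇¹ = q̇² = v²`, and (iii) collapses to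
`q̈² = v̇¹ = 0`. Conversely, under these equations both sides of (iii) and (iv) vanish. -/

theorem eq_of_forall_mul_sub_eq_zero {X R : Type*} [Ring R] [NoZeroDivisors R] {c : R}
    (hc : c ≠ 0) {f g : X → R} (h : ∀ x, c * (f x - g x) = 0) : f = g :=
  funext fun x => sub_eq_zero.mp ((mul_eq_zero.mp (h x)).resolve_left hc)

theorem stmt10_general (α β : ℝ) (hα : α = 0) (hβ : β ≠ 0) (q1 q2 v1 v2 : ℝ → ℝ) :
    ((∀ t, deriv q1 t = v1 t) ∧ (∀ t, deriv q2 t = v2 t) ∧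
        (∀ t, deriv v1 t = β * (q1 t - q2 t) - α * v2 t) ∧
        (∀ t, α * v1 t = β * (q1 t - q2 t))) ↔
      ((∀ t, v1 t = deriv q1 t) ∧ (∀ t, v2 t = deriv q2 t) ∧
        (∀ t, q1 t = q2 t) ∧ (∀ t, v1 t = v2 t) ∧
        (∀ t, deriv (deriv q2) t = 0)) := by
  subst hα
  constructor
  · rintro ⟨hq1, hq2, hv1, hconstr⟩
    have hq : q1 = q2 :=
      eq_of_forall_mul_sub_eq_zero hβ fun t => (hconstr t).symm.trans (zero_mul _)
    have hv : v1 = v2 := funext fun t => by rw [← hq1, ← hq2, hq]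
    have hdq2 : deriv q2 = v1 := by rw [hv]; exact funext hq2
    refine ⟨fun t => (hq1 t).symm, fun t => (hq2 t).symm, congrFun hq, congrFun hv, fun t => ?_⟩
    rw [hdq2, hv1 t, hq]
    ring
  · rintro ⟨hq1, hq2, hq, hv, hacc⟩
    have hv1 : v1 = deriv q2 := funext fun t => (hv t).trans (hq2 t)
    refine ⟨fun t => (hq1 t).symm, fun t => (hq2 t).symm, fun t => ?_, fun t => ?_⟩
    · rw [hv1, hacc, hq]
      ring
    · rw [hq]
      ring

/-- (Case `α = 0`, `β ≠ 0`.) A quadruple of twice differentiable functions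
`(q¹, q², v¹, v²)` satisfies the Hamilton–Cartan system
(i) `q̇¹ = v¹`, (ii) `q̇² = v²`, (iii) `v̇¹ = β(q¹−q²) − αv²`,
(iv) `αv¹ = β(q¹−q²)` if and only if `v¹ = q̇¹`, `v² = q̇²`, the constraints
`q¹ = q²` and `v¹ = v²` hold, and the final equation of motion `q̈² = 0` holds. -/
theorem stmt10 (α β : ℝ) (hα : α = 0) (hβ : β ≠ 0) (q1 q2 v1 v2 : ℝ → ℝ)
    (hq1 : Differentiable ℝ q1) (hq1' : Differentiable ℝ (deriv q1))
    (hq2 : Differentiable ℝ q2) (hq2' : Differentiable ℝ (deriv q2))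
    (hv1 : Differentiable ℝ v1) (hv1' : Differentiable ℝ (deriv v1))
    (hv2 : Differentiable ℝ v2) (hv2' : Differentiable ℝ (deriv v2)) :
    ((∀ t, deriv q1 t = v1 t) ∧ (∀ t, deriv q2 t = v2 t) ∧
        (∀ t, deriv v1 t = β * (q1 t - q2 t) - α * v2 t) ∧
        (∀ t, α * v1 t = β * (q1 t - q2 t))) ↔
      ((∀ t, v1 t = deriv q1 t) ∧ (∀ t, v2 t = deriv q2 t) ∧
        (∀ t, q1 t = q2 t) ∧ (∀ t, v1 t = v2 t) ∧
        (∀ t, deriv (deriv q2) t = 0)) :=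
  stmt10_general α β hα hβ q1 q2 v1 v2
end
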